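/- Define C(k, -1, x) := (1/(k+1)!) · Σ_{ℓ=0}^{k} (-1)^ℓ · c(k+2, ℓ+2) · C(k, ℓ, x), where C(n,k,x) = Σ_{j=0}^{min(n,k)} j! (x+1)^{(j)} S(n+1,j+1) S(k+1,j+1). Then x · C(k, -1, -x) = Σ_{j=0}^{k} (-1)^{j+1} (-x)^{(j+1)} S(k+1, j+1) / (j+1), as polynomials in x with rational coefficients. -/

import Mathlib

/-!
Expanding `C(k, ℓ, -x)` and exchanging the two sums reduces the identity to
`∑ ℓ, (-1)^ℓ c(k+2, ℓ+2) S(ℓ+1, j+1) = (-1)^j (k+1)!/(j+1)!`, which follows by induction on `k`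
from the recurrence for `c` and the orthogonality `∑ m, (-1)^m c(n, m) S(m, r) = (-1)^n δ_{nr}`.
The extra factor `x` then turns `j! (1-x)^{(j)}` into `-j! (-x)^{(j+1)}`.
-/

open Finset

/-- Stirling numbers of the second kind. -/
def stirling2 : ℕ → ℕ → ℕ
  | 0, 0 => 1
  | 0, _ + 1 => 0
  | _ + 1, 0 => 0
  | n + 1, k + 1 => (k + 1) * stirling2 n (k + 1) + stirling2 n k

/-- Unsigned Stirling numbers of the first kind. -/
def stirling1 : ℕ → ℕ → ℕ
  | 0, 0 => 1
  | 0, _ + 1 => 0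
  | _ + 1, 0 => 0
  | n + 1, k + 1 => n * stirling1 n (k + 1) + stirling1 n k

/-- The Callan polynomial, evaluated at x : ℚ. -/
def callan (n k : ℕ) (x : ℚ) : ℚ :=
  ∑ j ∈ Finset.range (min n k + 1),
    (j.factorial : ℚ) * (∏ i ∈ Finset.range j, (x + 1 + i)) *
      stirling2 (n + 1) (j + 1) * stirling2 (k + 1) (j + 1)

/-- The extension C(k, -1, x). -/
def callanNeg (k : ℕ) (x : ℚ) : ℚ :=
  (1 / ((k + 1).factorial : ℚ)) *
    ∑ l ∈ Finset.range (k + 1), (-1 : ℚ) ^ l * stirling1 (k + 2) (l + 2) * callan k l x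

theorem stirling1_eq_stirlingFirst : stirling1 = Nat.stirlingFirst := by
  funext n k
  induction n generalizing k with
  | zero => cases k <;> rfl
  | succ n ih => cases k <;> simp [stirling1, Nat.stirlingFirst_succ_succ, ih]

theorem stirling2_eq_stirlingSecond : stirling2 = Nat.stirlingSecond := by
  funext n k
  induction n generalizing k with
  | zero => cases k <;> rfl
  | succ n ih => cases k <;> simp [stirling2, Nat.stirlingSecond_succ_succ, ih]

theorem prod_range_succ_add_natCast {R : Type*} [CommSemiring R] (y : R) (j : ℕ) :
    ∏ i ∈ range (j + 1), (y + i) = y * ∏ i ∈ range j, (y + 1 + i) := by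
  rw [prod_range_succ', mul_comm]
  congr 1
  · simp
  · exact prod_congr rfl fun i _ => by push_cast; ring

namespace Nat

variable {R : Type*} [CommRing R]

theorem sum_range_neg_one_pow_mul_stirlingFirst_mul_stirlingSecond {n N : ℕ} (hnN : n < N)
    (r : ℕ) :
    ∑ m ∈ range N, (-1 : R) ^ m * stirlingFirst n m * stirlingSecond m r =
      if n = r then (-1) ^ n else 0 := by
  induction n generalizing N r with
  | zero =>
    obtain ⟨N, rfl⟩ : ∃ N', N = N' + 1 := ⟨N - 1, by omega⟩
    rw [sum_range_succ']
    cases r <;> simp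
  | succ n ih =>
    obtain ⟨N, rfl⟩ : ∃ N', N = N' + 1 := ⟨N - 1, by omega⟩
    cases r with
    | zero =>
      refine sum_eq_zero fun m _ ↦ ?_
      cases m <;> simp
    | succ r =>
      have hterm : ∀ m, (-1 : R) ^ (m + 1) * stirlingFirst (n + 1) (m + 1) *
          stirlingSecond (m + 1) (r + 1) =
            n * ((-1) ^ (m + 1) * stirlingFirst n (m + 1) * stirlingSecond (m + 1) (r + 1)) -
              (r + 1) * ((-1) ^ m * stirlingFirst n m * stirlingSecond m (r + 1)) -
              (-1) ^ m * stirlingFirst n m * stirlingSecond m r := by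
        intro m
        rw [stirlingFirst_succ_succ, stirlingSecond_succ_succ m r]
        push_cast
        ring
      have hshift : ∑ m ∈ range N,
          (-1 : R) ^ (m + 1) * stirlingFirst n (m + 1) * stirlingSecond (m + 1) (r + 1) =
            if n = r + 1 then (-1) ^ n else 0 := by
        rw [← ih (by omega : n < N + 1), sum_range_succ']
        simp
      rw [sum_range_succ']
      simp only [hterm, sum_sub_distrib, ← mul_sum, hshift, ih (by omega : n < N)]
      by_cases hnr : n = r + 1
      · subst hnr; simp
      · simp only [hnr, if_false, mul_zero, zero_sub, Nat.add_right_cancel_iff]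
        split_ifs <;> simp [pow_succ]

theorem factorial_mul_sum_range_stirlingFirst_mul_stirlingSecond {j k : ℕ} (hjk : j ≤ k) :
    ((j + 1)! : R) * ∑ l ∈ range (k + 1),
        (-1 : R) ^ l * stirlingFirst (k + 2) (l + 2) * stirlingSecond (l + 1) (j + 1) =
      (-1) ^ j * (k + 1)! := by
  induction k, hjk using Nat.le_induction with
  | base =>
    rw [sum_eq_single_of_mem j (self_mem_range_succ j) fun l hl hlj ↦ ?_]
    · simp [stirlingFirst_self, stirlingSecond_self, mul_comm]
    · rw [stirlingSecond_eq_zero_of_lt (by grind)]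
      simp
  | succ k hjk ih =>
    have hvanish : ∑ l ∈ range (k + 2),
        (-1 : R) ^ l * stirlingFirst (k + 2) (l + 1) * stirlingSecond (l + 1) (j + 1) = 0 := by
      have h := sum_range_neg_one_pow_mul_stirlingFirst_mul_stirlingSecond (R := R)
        (by omega : k + 2 < k + 3) (j + 1)
      rw [if_neg (by omega), sum_range_succ'] at h
      rw [← neg_eq_zero, ← sum_neg_distrib, ← h]
      simp [pow_succ]
    have hsplit : ∑ l ∈ range (k + 2),
        (-1 : R) ^ l * stirlingFirst (k + 3) (l + 2) * stirlingSecond (l + 1) (j + 1) =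
          (k + 2) * ∑ l ∈ range (k + 2),
            (-1 : R) ^ l * stirlingFirst (k + 2) (l + 2) * stirlingSecond (l + 1) (j + 1) +
          ∑ l ∈ range (k + 2),
            (-1 : R) ^ l * stirlingFirst (k + 2) (l + 1) * stirlingSecond (l + 1) (j + 1) := by
      rw [mul_sum, ← sum_add_distrib]
      refine sum_congr rfl fun l _ ↦ ?_
      rw [stirlingFirst_succ_succ]
      push_cast
      ring
    rw [hsplit, hvanish, add_zero, sum_range_succ,
      stirlingFirst_eq_zero_of_lt (by omega : k + 2 < k + 1 + 2), factorial_succ (k + 1)]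
    push_cast
    linear_combination (k + 2 : R) * ih

end Nat

open Nat

theorem callan_eq_sum_range (n k : ℕ) (x : ℚ) :
    callan n k x = ∑ j ∈ range (n + 1), (j ! : ℚ) * (∏ i ∈ range j, (x + 1 + i)) *
      stirlingSecond (n + 1) (j + 1) * stirlingSecond (k + 1) (j + 1) := by
  rw [callan, stirling2_eq_stirlingSecond]
  refine sum_subset (range_subset_range.2 (by omega)) fun j hjn hj ↦ ?_
  rw [mem_range] at hjn hj
  rw [stirlingSecond_eq_zero_of_lt (by omega : k + 1 < j + 1)]
  simp

theorem stmt18 (k : ℕ) (x : ℚ) :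
    x * callanNeg k (-x) =
      ∑ j ∈ Finset.range (k + 1),
        (-1 : ℚ) ^ (j + 1) * (∏ i ∈ Finset.range (j + 1), (-x + i)) *
          stirling2 (k + 1) (j + 1) / (j + 1) := by
  have hsum : ∀ j ∈ range (k + 1), ∑ l ∈ range (k + 1),
      (-1 : ℚ) ^ l * stirlingFirst (k + 2) (l + 2) * stirlingSecond (l + 1) (j + 1) =
        (-1) ^ j * (k + 1)! / (j + 1)! := fun j hj ↦
    eq_div_of_mul_eq (by positivity) <| by
      rw [mul_comm]
      exact factorial_mul_sum_range_stirlingFirst_mul_stirlingSecond (mem_range_succ_iff.1 hj)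
  calc x * callanNeg k (-x)
      = ∑ j ∈ range (k + 1), x / (k + 1)! * (j ! * (∏ i ∈ range j, (-x + 1 + i)) *
          stirlingSecond (k + 1) (j + 1)) * ∑ l ∈ range (k + 1),
            (-1 : ℚ) ^ l * stirlingFirst (k + 2) (l + 2) * stirlingSecond (l + 1) (j + 1) := by
        simp only [callanNeg, callan_eq_sum_range, stirling1_eq_stirlingFirst, mul_sum]
        rw [sum_comm]
        refine sum_congr rfl fun j _ ↦ sum_congr rfl fun l _ ↦ ?_
        ring
    _ = _ := by
        rw [stirling2_eq_stirlingSecond]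
        refine sum_congr rfl fun j hj ↦ ?_
        rw [hsum j hj, prod_range_succ_add_natCast, factorial_succ j]
        field_simp
        push_cast
        ring
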